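/- arXiv:0909.2108 — 2 statements merged into one kernel-verified Lean document; each statement's English description precedes it below -/
import Mathlib

section
/- Assume p ∈ (1/2,1) and let f_c < a < b < 1. Then for every n, surely (pointwise on the probability space), Σ_{k=1}^{n} B_k · 1_{(a,b)}(U_k) − t_n ≤ |R_n ∩ (a,b)| ≤ Σ_{k=1}^{n} B_k · 1_{(a,b)}(U_k), where 1_{(a,b)} is the indicator function of the interval (a,b). -/
open MeasureTheory ProbabilityTheory Filter

noncomputable def evoS {Ω : Type*} (B U : ℕ → Ω → ℝ) (ω : Ω) : ℕ → Finset ℝ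
  | 0 => ∅
  | n + 1 =>
      let S := evoS B U ω n
      if B (n + 1) ω = 1 then insert (U (n + 1) ω) S
      else if h : S.Nonempty then S.erase (S.min' h) else ∅

/-- `L n = S n ∩ (0, f_c)`. -/
noncomputable def evoL {Ω : Type*} (fc : ℝ) (B U : ℕ → Ω → ℝ) (ω : Ω) (n : ℕ) : Finset ℝ :=
  (evoS B U ω n).filter (fun x => 0 < x ∧ x < fc)

/-- `R n = S n ∩ (f_c, 1)`. -/
noncomputable def evoR {Ω : Type*} (fc : ℝ) (B U : ℕ → Ω → ℝ) (ω : Ω) (n : ℕ) : Finset ℝ :=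
  (evoS B U ω n).filter (fun x => fc < x ∧ x < 1)

/-- `t n = #{1 ≤ k ≤ n : L k = ∅}`. -/
noncomputable def evoT {Ω : Type*} (fc : ℝ) (B U : ℕ → Ω → ℝ) (ω : Ω) (n : ℕ) : ℕ :=
  Set.ncard {k : ℕ | 1 ≤ k ∧ k ≤ n ∧ evoL fc B U ω k = ∅}

/-!
A birth at a fitness in `(a, b)` adds exactly one point to `S ∩ (a, b)` (fitness values are
distinct), and no step adds more, which gives the upper bound. A death removes a point of
`(a, b)` only when that point is the minimum of `S`; then every survivor exceeds `a > f_c`, so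
`L` is empty after that step, and each such loss is paid for by one unit of `t_n`. Finally
`R_n ∩ (a, b) = S_n ∩ (a, b)` because `f_c < a` and `b < 1`.
-/

section Telescoping

variable {α : Type*} [AddCommMonoid α] [PartialOrder α] [IsOrderedAddMonoid α] {c x y : ℕ → α}

theorem le_sum_Icc_of_succ_le (h0 : c 0 = 0) (hstep : ∀ n, c (n + 1) ≤ c n + x (n + 1))
    (n : ℕ) : c n ≤ ∑ k ∈ Finset.Icc 1 n, x k := by
  induction n with
  | zero => simp [h0]
  | succ n ih =>
    rw [Finset.sum_Icc_succ_top (by omega)]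
    exact (hstep n).trans (add_le_add_left ih _)

theorem sum_Icc_le_add_sum_Icc_of_add_le (h0 : c 0 = 0)
    (hstep : ∀ n, c n + x (n + 1) ≤ c (n + 1) + y (n + 1)) (n : ℕ) :
    ∑ k ∈ Finset.Icc 1 n, x k ≤ c n + ∑ k ∈ Finset.Icc 1 n, y k := by
  induction n with
  | zero => simp [h0]
  | succ n ih =>
    rw [Finset.sum_Icc_succ_top (by omega), Finset.sum_Icc_succ_top (by omega)]
    calc ∑ k ∈ Finset.Icc 1 n, x k + x (n + 1)
        ≤ c n + ∑ k ∈ Finset.Icc 1 n, y k + x (n + 1) := add_le_add_left ih _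
      _ = c n + x (n + 1) + ∑ k ∈ Finset.Icc 1 n, y k := by abel
      _ ≤ c (n + 1) + y (n + 1) + ∑ k ∈ Finset.Icc 1 n, y k := add_le_add_left (hstep n) _
      _ = c (n + 1) + (∑ k ∈ Finset.Icc 1 n, y k + y (n + 1)) := by abel

end Telescoping

section Evolution

variable {Ω : Type*} (B U : ℕ → Ω → ℝ) (ω : Ω)

theorem evoS_succ_of_birth {n : ℕ} (hB : B (n + 1) ω = 1) :
    evoS B U ω (n + 1) = insert (U (n + 1) ω) (evoS B U ω n) := by
  rw [evoS, if_pos hB]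

theorem evoS_succ_of_death {n : ℕ} (hB : B (n + 1) ω ≠ 1) (hS : (evoS B U ω n).Nonempty) :
    evoS B U ω (n + 1) = (evoS B U ω n).erase ((evoS B U ω n).min' hS) := by
  rw [evoS, if_neg hB, dif_pos hS]

theorem evoS_succ_of_empty {n : ℕ} (hB : B (n + 1) ω ≠ 1) (hS : evoS B U ω n = ∅) :
    evoS B U ω (n + 1) = ∅ := by
  rw [evoS, if_neg hB, dif_neg (Finset.not_nonempty_iff_eq_empty.mpr hS)]

theorem exists_eq_of_mem_evoS {n : ℕ} {x : ℝ} (hx : x ∈ evoS B U ω n) :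
    ∃ k ∈ Finset.Icc 1 n, U k ω = x := by
  induction n generalizing x with
  | zero => simp [evoS] at hx
  | succ n ih =>
    have mono : ∀ y ∈ evoS B U ω n, ∃ k ∈ Finset.Icc 1 (n + 1), U k ω = y := fun y hy ↦
      (ih hy).imp fun k ⟨hk, hky⟩ ↦ ⟨Finset.Icc_subset_Icc_right n.le_succ hk, hky⟩
    by_cases hB : B (n + 1) ω = 1
    · rw [evoS_succ_of_birth B U ω hB, Finset.mem_insert] at hx
      rcases hx with rfl | hx
      · exact ⟨n + 1, by simp, rfl⟩
      · exact mono x hx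
    · by_cases hS : (evoS B U ω n).Nonempty
      · rw [evoS_succ_of_death B U ω hB hS] at hx
        exact mono x (Finset.mem_of_mem_erase hx)
      · simp [evoS_succ_of_empty B U ω hB (Finset.not_nonempty_iff_eq_empty.mp hS)] at hx

theorem succ_notMem_evoS_of_injective (hinj : Function.Injective fun k ↦ U k ω) (n : ℕ) :
    U (n + 1) ω ∉ evoS B U ω n := by
  intro h
  obtain ⟨k, hk, hUk⟩ := exists_eq_of_mem_evoS B U ω h
  have : k = n + 1 := hinj hUk
  simp [this] at hk

theorem card_filter_evoS_succ_le (P : ℝ → Prop) [DecidablePred P] (n : ℕ) :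
    ((evoS B U ω (n + 1)).filter P).card
      ≤ ((evoS B U ω n).filter P).card + if B (n + 1) ω = 1 ∧ P (U (n + 1) ω) then 1 else 0 := by
  by_cases hB : B (n + 1) ω = 1
  · rw [evoS_succ_of_birth B U ω hB, Finset.filter_insert]
    split_ifs <;> simp_all [Finset.card_insert_le]
  · rw [if_neg (fun h ↦ hB h.1), add_zero]
    by_cases hS : (evoS B U ω n).Nonempty
    · rw [evoS_succ_of_death B U ω hB hS, Finset.filter_erase]
      exact Finset.card_erase_le
    · simp [evoS_succ_of_empty B U ω hB (Finset.not_nonempty_iff_eq_empty.mp hS)]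

theorem evoL_eq_empty_of_le {fc : ℝ} {n : ℕ} (h : ∀ x ∈ evoS B U ω n, fc ≤ x) :
    evoL fc B U ω n = ∅ :=
  Finset.filter_eq_empty_iff.mpr fun x hx ⟨_, hxfc⟩ ↦ (h x hx).not_gt hxfc

theorem card_filter_evoS_add_le_succ (hinj : Function.Injective fun k ↦ U k ω)
    {fc a b : ℝ} (hfa : fc < a) (n : ℕ) :
    ((evoS B U ω n).filter (fun x ↦ a < x ∧ x < b)).card
        + (if B (n + 1) ω = 1 ∧ a < U (n + 1) ω ∧ U (n + 1) ω < b then 1 else 0)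
      ≤ ((evoS B U ω (n + 1)).filter (fun x ↦ a < x ∧ x < b)).card
        + if evoL fc B U ω (n + 1) = ∅ then 1 else 0 := by
  by_cases hB : B (n + 1) ω = 1
  · have hU := succ_notMem_evoS_of_injective B U ω hinj n
    rw [evoS_succ_of_birth B U ω hB, Finset.filter_insert]
    split_ifs <;> simp_all [Finset.card_insert_of_notMem]
  · rw [if_neg (fun h ↦ hB h.1), add_zero]
    by_cases hS : (evoS B U ω n).Nonempty
    · rw [evoS_succ_of_death B U ω hB hS, Finset.filter_erase]
      set m := (evoS B U ω n).min' hS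
      by_cases hm : a < m ∧ m < b
      · have hL : evoL fc B U ω (n + 1) = ∅ := by
          refine evoL_eq_empty_of_le B U ω fun x hx ↦ ?_
          rw [evoS_succ_of_death B U ω hB hS] at hx
          linarith [(evoS B U ω n).min'_le x (Finset.mem_of_mem_erase hx)]
        rw [if_pos hL, Finset.card_erase_add_one (Finset.mem_filter.mpr ⟨Finset.min'_mem _ _, hm⟩)]
      · have hm' : m ∉ (evoS B U ω n).filter (fun x ↦ a < x ∧ x < b) :=
          fun h ↦ hm (Finset.mem_filter.mp h).2
        rw [Finset.erase_eq_of_notMem hm']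
        exact Nat.le_add_right _ _
    · simp [Finset.not_nonempty_iff_eq_empty.mp hS]

theorem evoT_eq_sum (fc : ℝ) (n : ℕ) :
    evoT fc B U ω n = ∑ k ∈ Finset.Icc 1 n, if evoL fc B U ω k = ∅ then 1 else 0 := by
  rw [← Finset.card_filter, evoT, ← Set.ncard_coe_finset]
  congr 1
  ext k
  simp [and_assoc]

theorem filter_evoR_eq {fc a b : ℝ} (hfa : fc < a) (hb : b < 1) (n : ℕ) :
    (evoR fc B U ω n).filter (fun x ↦ a < x ∧ x < b)
      = (evoS B U ω n).filter (fun x ↦ a < x ∧ x < b) := by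
  rw [evoR, Finset.filter_filter]
  refine Finset.filter_congr fun x _ ↦ ⟨And.right, fun h ↦ ⟨⟨?_, ?_⟩, h⟩⟩ <;> linarith [h.1, h.2]

end Evolution

theorem mul_indicator_Ioo_eq_ite {β a b u : ℝ} (hβ : β = 0 ∨ β = 1) :
    β * (Set.Ioo a b).indicator (fun _ ↦ (1 : ℝ)) u = if β = 1 ∧ a < u ∧ u < b then 1 else 0 := by
  rcases hβ with rfl | rfl <;> simp [Set.indicator_apply]

theorem stmt5_general {Ω : Type*}
    (p : ℝ)
    (B U : ℕ → Ω → ℝ)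
    (hB01 : ∀ n ω, B n ω = 0 ∨ B n ω = 1)
    (a b : ℝ) (ha : (1 - p) / p < a) (hb : b < 1)
    (ω : Ω) (hinj : Function.Injective fun k : ℕ => U k ω) (n : ℕ) :
    (∑ k ∈ Finset.Icc 1 n, B k ω * Set.indicator (Set.Ioo a b) (fun _ => (1 : ℝ)) (U k ω))
        - (evoT ((1 - p) / p) B U ω n : ℝ)
      ≤ (((evoR ((1 - p) / p) B U ω n).filter (fun x => a < x ∧ x < b)).card : ℝ) ∧
    (((evoR ((1 - p) / p) B U ω n).filter (fun x => a < x ∧ x < b)).card : ℝ)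
      ≤ ∑ k ∈ Finset.Icc 1 n, B k ω * Set.indicator (Set.Ioo a b) (fun _ => (1 : ℝ)) (U k ω) := by
  have hbirths : ∑ k ∈ Finset.Icc 1 n, B k ω * (Set.Ioo a b).indicator (fun _ ↦ (1 : ℝ)) (U k ω)
      = ((∑ k ∈ Finset.Icc 1 n,
          if B k ω = 1 ∧ a < U k ω ∧ U k ω < b then 1 else 0 : ℕ) : ℝ) := by
    push_cast
    exact Finset.sum_congr rfl fun k _ ↦ mul_indicator_Ioo_eq_ite (hB01 k ω)
  set count : ℕ → ℕ := fun m ↦ ((evoS B U ω m).filter fun x ↦ a < x ∧ x < b).card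
  have hcount0 : count 0 = 0 := by simp [count, evoS]
  rw [hbirths, evoT_eq_sum, filter_evoR_eq B U ω ha hb, sub_le_iff_le_add]
  constructor
  · exact_mod_cast sum_Icc_le_add_sum_Icc_of_add_le (c := count) hcount0
      (card_filter_evoS_add_le_succ B U ω hinj ha) n
  · exact_mod_cast le_sum_Icc_of_succ_le (c := count) hcount0 (card_filter_evoS_succ_le B U ω _) n

/-- Inequality (4): pointwise (for any realization in which all fitness values are
distinct, which happens almost surely),
`Σ_{k=1}^n B_k 1_{(a,b)}(U_k) − t_n ≤ |R_n ∩ (a,b)| ≤ Σ_{k=1}^n B_k 1_{(a,b)}(U_k)`. -/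
theorem stmt5 {Ω : Type*} [MeasurableSpace Ω] (P : Measure Ω) [IsProbabilityMeasure P]
    (p : ℝ) (hp : 1 / 2 < p) (hp1 : p < 1)
    (B U : ℕ → Ω → ℝ)
    (hmB : ∀ n, Measurable (B n)) (hmU : ∀ n, Measurable (U n))
    (hB01 : ∀ n ω, B n ω = 0 ∨ B n ω = 1)
    (hindep : iIndepFun (Sum.elim B U) P)
    (hBdist : ∀ n, Measure.map (B n) P
      = ENNReal.ofReal p • Measure.dirac (1 : ℝ) + ENNReal.ofReal (1 - p) • Measure.dirac (0 : ℝ))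
    (hUdist : ∀ n, Measure.map (U n) P = volume.restrict (Set.Ioo (0 : ℝ) 1))
    (a b : ℝ) (ha : (1 - p) / p < a) (hab : a < b) (hb : b < 1)
    (ω : Ω) (hinj : Function.Injective fun k : ℕ => U k ω) (n : ℕ) :
    (∑ k ∈ Finset.Icc 1 n, B k ω * Set.indicator (Set.Ioo a b) (fun _ => (1 : ℝ)) (U k ω))
        - (evoT ((1 - p) / p) B U ω n : ℝ)
      ≤ (((evoR ((1 - p) / p) B U ω n).filter (fun x => a < x ∧ x < b)).card : ℝ) ∧
    (((evoR ((1 - p) / p) B U ω n).filter (fun x => a < x ∧ x < b)).card : ℝ)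
      ≤ ∑ k ∈ Finset.Icc 1 n, B k ω * Set.indicator (Set.Ioo a b) (fun _ => (1 : ℝ)) (U k ω) :=
  stmt5_general p B U hB01 a b ha hb ω hinj n
end

section
/- Let p ∈ (1/2,1), q = 1-p, and let μ be an atomless Borel probability measure on ℝ. Consider the generalized model in which the fitnesses (U_n)_{n≥1} are i.i.d. with distribution μ instead of uniform on (0,1). Suppose f_c ∈ ℝ satisfies μ((-∞, f_c)) = q/p. Then for all real numbers a, b with f_c ≤ a < b, almost surely lim_{n→∞} (1/n) |S_n ∩ (a,b)| = p · μ((a,b)). -/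
/-
The number `L n` of particles of fitness `≤ a` is a Lindley process `L (n+1) = max (L n + ξ) 0`
driven by the i.i.d. increments `ξ = +1` (birth at fitness `≤ a`), `0` (birth above `a`) and
`-1` (death): a death removes a particle `≤ a` whenever there is one, and births land on fresh
points almost surely since `μ` has no atoms. Hence `L n = X n + max_{k ≤ n} (-X k)` for the
random walk `X` with increments `ξ`, whose drift `p μ(-∞, a] - q` is nonnegative because
`a ≥ f_c`; the reflection term is therefore `o(n)`. A particle in `(a, b)` can only die at a
reflection time, so the number of particles in `(a, b)` lies between the number of births into
`(a, b)` minus the reflection term and that number of births, and the strong law of large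
numbers gives `p μ(a, b)` for the latter.
-/

open MeasureTheory ProbabilityTheory Filter

open Finset Topology

noncomputable def lindley (ξ : ℕ → ℝ) : ℕ → ℝ
  | 0 => 0
  | n + 1 => max (lindley ξ n + ξ n) 0

theorem lindley_eq_sum_add_partialSups (ξ : ℕ → ℝ) (n : ℕ) :
    lindley ξ n = ∑ i ∈ range n, ξ i + partialSups (fun k => -∑ i ∈ range k, ξ i) n := by
  induction n with
  | zero => simp [lindley]
  | succ n ih =>
    rw [← Order.succ_eq_add_one, partialSups_succ, Order.succ_eq_add_one]
    show max (lindley ξ n + ξ n) 0 = _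
    rw [ih, sum_range_succ, ← max_add_add_left]
    congr 1 <;> ring

theorem tendsto_partialSups_div_of_tendsto_div {y : ℕ → ℝ} {c : ℝ} (hc : c ≤ 0)
    (hy : Tendsto (fun n => y n / n) atTop (𝓝 c)) :
    Tendsto (fun n => partialSups y n / n) atTop (𝓝 0) := by
  refine tendsto_order.2 ⟨fun r hr => ?_, fun r hr => ?_⟩
  · have h0 : Tendsto (fun n : ℕ => y 0 / n) atTop (𝓝 0) :=
      tendsto_const_div_atTop_nhds_zero_nat _
    filter_upwards [h0.eventually (lt_mem_nhds hr), eventually_gt_atTop 0] with n hn hnpos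
    exact hn.trans_le
      (div_le_div_of_nonneg_right (le_partialSups_of_le y (Nat.zero_le n)) (Nat.cast_nonneg n))
  · set ε := r / 2 with hεr
    have hε : 0 < ε := half_pos hr
    have hev : ∀ᶠ k : ℕ in atTop, y k - ε * k ≤ 0 := by
      filter_upwards [hy.eventually (gt_mem_nhds (hc.trans_lt hε)), eventually_gt_atTop 0]
        with k hk hkpos
      have : (0 : ℝ) < k := Nat.cast_pos.2 hkpos
      rw [div_lt_iff₀ this] at hk
      linarith
    obtain ⟨C, hC⟩ := (isBoundedUnder_of_eventually_le hev).bddAbove_range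
    have hsup : ∀ n, partialSups y n ≤ C + ε * n := fun n =>
      partialSups_le y n _ fun k hk => by
        have h1 := hC ⟨k, rfl⟩
        have h2 : ε * k ≤ ε * n := by gcongr
        linarith
    have hCn : Tendsto (fun n : ℕ => C / n) atTop (𝓝 0) :=
      tendsto_const_div_atTop_nhds_zero_nat C
    filter_upwards [hCn.eventually (gt_mem_nhds hε), eventually_gt_atTop 0] with n hn hnpos
    have hn' : (0 : ℝ) < n := Nat.cast_pos.2 hnpos
    calc partialSups y n / n ≤ (C + ε * n) / n := div_le_div_of_nonneg_right (hsup n) hn'.le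
      _ = C / n + ε := by field_simp
      _ < r := by linarith

noncomputable def evoStep (x : ℝ × ℝ) (S : Finset ℝ) : Finset ℝ :=
  if x.1 = 1 then insert x.2 S else if h : S.Nonempty then S.erase (S.min' h) else ∅

noncomputable def walkStep (a : ℝ) (x : ℝ × ℝ) : ℝ :=
  if x.1 = 1 then (if x.2 ≤ a then 1 else 0) else -1

noncomputable def midBirth (a b : ℝ) (x : ℝ × ℝ) : ℝ :=
  if x.1 = 1 ∧ a < x.2 ∧ x.2 < b then 1 else 0

section evoStep

variable {a b : ℝ} {x : ℝ × ℝ} {S : Finset ℝ}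

theorem evoStep_of_eq_one (h : x.1 = 1) : evoStep x S = insert x.2 S := if_pos h

theorem evoStep_of_ne_one (h : x.1 ≠ 1) (hS : S.Nonempty) :
    evoStep x S = S.erase (S.min' hS) := by
  rw [evoStep, if_neg h, dif_pos hS]

theorem evoStep_empty_of_ne_one (h : x.1 ≠ 1) : evoStep x ∅ = ∅ := by
  simp [evoStep, h]

theorem evoStep_subset_insert : evoStep x S ⊆ insert x.2 S := by
  unfold evoStep
  split_ifs
  · exact Subset.rfl
  · exact (erase_subset _ _).trans (subset_insert _ _)
  · exact empty_subset _

theorem cast_card_filter_insert {q : ℝ → Prop} [DecidablePred q] {u : ℝ} (hu : u ∉ S) :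
    (#((insert u S).filter q) : ℝ) = #(S.filter q) + if q u then 1 else 0 := by
  rw [filter_insert]
  split_ifs with h
  · rw [card_insert_of_notMem (fun h' => hu (mem_filter.1 h').1)]; push_cast; ring
  · simp

theorem min'_mem_filter_le (hS : S.Nonempty) (hlow : (S.filter (· ≤ a)).Nonempty) :
    S.min' hS ∈ S.filter (· ≤ a) := by
  obtain ⟨y, hy⟩ := hlow
  rw [mem_filter] at hy
  exact mem_filter.2 ⟨min'_mem S hS, (min'_le S y hy.1).trans hy.2⟩

theorem card_filter_le_evoStep (hx : x.2 ∉ S) :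
    (#((evoStep x S).filter (· ≤ a)) : ℝ) = max (#(S.filter (· ≤ a)) + walkStep a x) 0 := by
  rcases eq_or_ne x.1 1 with hbirth | hdeath
  · rw [evoStep_of_eq_one hbirth, walkStep, if_pos hbirth, cast_card_filter_insert hx,
      max_eq_left (by positivity)]
  rw [walkStep, if_neg hdeath]
  rcases S.eq_empty_or_nonempty with rfl | hS
  · simp [evoStep_empty_of_ne_one hdeath]
  rw [evoStep_of_ne_one hdeath hS, filter_erase]
  rcases (S.filter (· ≤ a)).eq_empty_or_nonempty with hlow | hlow
  · simp [hlow]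
  have hmin := min'_mem_filter_le hS hlow
  have hpos : (1 : ℝ) ≤ #(S.filter (· ≤ a)) := by exact_mod_cast card_pos.2 ⟨_, hmin⟩
  rw [cast_card_erase_of_mem hmin, max_eq_left (by linarith)]
  ring

theorem card_filter_Ioo_evoStep_le :
    (#((evoStep x S).filter (fun y => a < y ∧ y < b)) : ℝ)
      ≤ #(S.filter (fun y => a < y ∧ y < b)) + midBirth a b x := by
  rcases eq_or_ne x.1 1 with hbirth | hdeath
  · rw [evoStep_of_eq_one hbirth, filter_insert, midBirth]
    by_cases hmid : a < x.2 ∧ x.2 < b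
    · rw [if_pos hmid, if_pos ⟨hbirth, hmid⟩]
      exact_mod_cast card_insert_le _ _
    · rw [if_neg hmid, if_neg (fun h => hmid h.2), add_zero]
  rw [midBirth, if_neg (fun h => hdeath h.1), add_zero]
  rcases S.eq_empty_or_nonempty with rfl | hS
  · simp [evoStep_empty_of_ne_one hdeath]
  rw [evoStep_of_ne_one hdeath hS, filter_erase]
  exact_mod_cast card_erase_le

-- The subtracted bracket is the increment of the reflection term: it is `1` exactly at a death
-- when no particle lies `≤ a`, the only kind of step at which a particle of `(a, b)` can die.
theorem card_filter_Ioo_le_evoStep (hx : x.2 ∉ S) :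
    (#(S.filter (fun y => a < y ∧ y < b)) : ℝ) + midBirth a b x
        - (max (#(S.filter (· ≤ a)) + walkStep a x) 0 - (#(S.filter (· ≤ a)) + walkStep a x))
      ≤ #((evoStep x S).filter (fun y => a < y ∧ y < b)) := by
  rcases eq_or_ne x.1 1 with hbirth | hdeath
  · have hnonneg : 0 ≤ (#(S.filter (· ≤ a)) : ℝ) + walkStep a x := by
      rw [walkStep, if_pos hbirth]; positivity
    rw [max_eq_left hnonneg, sub_self, sub_zero, evoStep_of_eq_one hbirth,
      cast_card_filter_insert hx, midBirth]
    simp [hbirth]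
  rw [walkStep, if_neg hdeath, midBirth, if_neg (fun h => hdeath h.1), add_zero]
  rcases S.eq_empty_or_nonempty with rfl | hS
  · simp [evoStep_empty_of_ne_one hdeath]
  rw [evoStep_of_ne_one hdeath hS, filter_erase]
  rcases (S.filter (· ≤ a)).eq_empty_or_nonempty with hlow | hlow
  · rw [hlow, card_empty, Nat.cast_zero]
    have h : #(S.filter (fun y => a < y ∧ y < b))
        ≤ #((S.filter (fun y => a < y ∧ y < b)).erase (S.min' hS)) + 1 :=
      Nat.sub_le_iff_le_add.1 pred_card_le_card_erase
    norm_num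
    exact_mod_cast h
  have hmin := mem_filter.1 (min'_mem_filter_le hS hlow)
  have hpos : (1 : ℝ) ≤ #(S.filter (· ≤ a)) := by exact_mod_cast card_pos.2 hlow
  rw [erase_eq_of_notMem (fun h => (mem_filter.1 h).2.1.not_ge hmin.2),
    max_eq_left (by linarith)]
  simp

end evoStep

section evoS

variable {Ω : Type*} (B U : ℕ → Ω → ℝ) (ω : Ω) {a b : ℝ}

theorem evoS_succ (n : ℕ) :
    evoS B U ω (n + 1) = evoStep (B (n + 1) ω, U (n + 1) ω) (evoS B U ω n) := rfl

theorem evoS_subset_image (n : ℕ) : evoS B U ω n ⊆ (Icc 1 n).image (U · ω) := by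
  induction n with
  | zero => simp [evoS]
  | succ n ih =>
    rw [evoS_succ]
    refine evoStep_subset_insert.trans (insert_subset ?_ ?_)
    · exact mem_image_of_mem _ (mem_Icc.2 ⟨Nat.le_add_left 1 n, le_rfl⟩)
    · exact ih.trans (image_subset_image (Icc_subset_Icc_right (Nat.le_succ n)))

variable {U ω}

theorem U_succ_notMem_evoS (hinj : Function.Injective (U · ω)) (n : ℕ) :
    U (n + 1) ω ∉ evoS B U ω n := fun h => by
  obtain ⟨k, hk, hkU⟩ := mem_image.1 (evoS_subset_image B U ω n h)
  have := hinj hkU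
  have := (mem_Icc.1 hk).2
  omega

theorem card_filter_le_evoS (hinj : Function.Injective (U · ω)) (n : ℕ) :
    (#((evoS B U ω n).filter (· ≤ a)) : ℝ)
      = lindley (fun i => walkStep a (B (i + 1) ω, U (i + 1) ω)) n := by
  induction n with
  | zero => simp [evoS, lindley]
  | succ n ih =>
    rw [evoS_succ, card_filter_le_evoStep (U_succ_notMem_evoS B hinj n), ih]
    rfl

theorem card_filter_Ioo_evoS_le (n : ℕ) :
    (#((evoS B U ω n).filter (fun y => a < y ∧ y < b)) : ℝ)
      ≤ ∑ i ∈ range n, midBirth a b (B (i + 1) ω, U (i + 1) ω) := by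
  induction n with
  | zero => simp [evoS]
  | succ n ih =>
    rw [evoS_succ, sum_range_succ]
    linarith [card_filter_Ioo_evoStep_le (a := a) (b := b) (x := (B (n + 1) ω, U (n + 1) ω))
      (S := evoS B U ω n)]

theorem sum_sub_le_card_filter_Ioo_evoS (hinj : Function.Injective (U · ω)) (n : ℕ) :
    ∑ i ∈ range n, midBirth a b (B (i + 1) ω, U (i + 1) ω)
        - (lindley (fun i => walkStep a (B (i + 1) ω, U (i + 1) ω)) n
          - ∑ i ∈ range n, walkStep a (B (i + 1) ω, U (i + 1) ω))
      ≤ #((evoS B U ω n).filter (fun y => a < y ∧ y < b)) := by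
  induction n with
  | zero => simp [evoS, lindley]
  | succ n ih =>
    have hstep := card_filter_Ioo_le_evoStep (a := a) (b := b) (x := (B (n + 1) ω, U (n + 1) ω))
      (U_succ_notMem_evoS B hinj n)
    rw [card_filter_le_evoS B hinj] at hstep
    rw [evoS_succ, sum_range_succ, sum_range_succ]
    change _ - (max (lindley _ n + _) 0 - _) ≤ _
    linarith

theorem tendsto_card_filter_Ioo_evoS_div (hinj : Function.Injective (U · ω)) {c d : ℝ}
    (hd : 0 ≤ d)
    (hX : Tendsto (fun n : ℕ => (∑ i ∈ range n, walkStep a (B (i + 1) ω, U (i + 1) ω)) / n)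
      atTop (𝓝 d))
    (hM : Tendsto
      (fun n : ℕ => (∑ i ∈ range n, midBirth a b (B (i + 1) ω, U (i + 1) ω)) / n) atTop (𝓝 c)) :
    Tendsto (fun n : ℕ => (#((evoS B U ω n).filter (fun y => a < y ∧ y < b)) : ℝ) / n)
      atTop (𝓝 c) := by
  set X := fun n => ∑ i ∈ range n, walkStep a (B (i + 1) ω, U (i + 1) ω)
  have hsup : Tendsto (fun n : ℕ => partialSups (fun k => -X k) n / n) atTop (𝓝 0) :=
    tendsto_partialSups_div_of_tendsto_div (neg_nonpos.2 hd)
      (by simpa only [neg_div] using hX.neg)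
  have hlower := hM.sub hsup
  rw [sub_zero] at hlower
  refine tendsto_of_tendsto_of_tendsto_of_le_of_le hlower hM (fun n => ?_) (fun n => ?_)
  · rw [← sub_div]
    gcongr
    have := sum_sub_le_card_filter_Ioo_evoS B (a := a) (b := b) hinj n
    rwa [lindley_eq_sum_add_partialSups, add_sub_cancel_left] at this
  · gcongr
    exact card_filter_Ioo_evoS_le B n

end evoS

section probability

variable {Ω : Type*} [MeasurableSpace Ω] {P : Measure Ω}

theorem ae_ne_of_indepFun [IsFiniteMeasure P] {α : Type*} [MeasurableSpace α] [MeasurableEq α]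
    {X Y : Ω → α} (hX : Measurable X) (hY : Measurable Y) (hXY : IndepFun X Y P)
    {ν : Measure α} (hYν : P.map Y = ν) [NullSingletonClass ν] :
    ∀ᵐ ω ∂P, X ω ≠ Y ω := by
  have hdiag : (P.map X).prod ν (Set.diagonal α) = 0 := by
    rw [← hYν, Measure.prod_apply measurableSet_diagonal]
    simp [hYν, Set.preimage, Set.diagonal]
  rw [ae_iff]
  simp only [ne_eq, not_not]
  rw [← hYν, ← (indepFun_iff_map_prod_eq_prod_map_map hX.aemeasurable hY.aemeasurable).1 hXY,
    Measure.map_apply (hX.prodMk hY) measurableSet_diagonal] at hdiag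
  exact hdiag

theorem ae_injective_of_indepFun [IsFiniteMeasure P] {α : Type*} [MeasurableSpace α]
    [MeasurableEq α] {U : ℕ → Ω → α} (hU : ∀ n, Measurable (U n))
    (hind : Pairwise fun i j => IndepFun (U i) (U j) P)
    {ν : Measure α} (hUν : ∀ n, P.map (U n) = ν) [NullSingletonClass ν] :
    ∀ᵐ ω ∂P, Function.Injective (U · ω) := by
  have h : ∀ᵐ ω ∂P, ∀ i j, i ≠ j → U i ω ≠ U j ω := by
    refine ae_all_iff.2 fun i => ae_all_iff.2 fun j => ?_
    rcases eq_or_ne i j with rfl | hij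
    · exact Eventually.of_forall fun _ h => (h rfl).elim
    · exact (ae_ne_of_indepFun (hU i) (hU j) (hind hij) (hUν j)).mono fun _ h _ => h
  filter_upwards [h] with ω hω i j
  exact not_imp_not.1 (hω i j)

theorem strong_law_ae_comp {α : Type*} [MeasurableSpace α] {V : ℕ → Ω → α}
    (hV : ∀ i, Measurable (V i)) (hind : Pairwise fun i j => IndepFun (V i) (V j) P)
    {ν : Measure α} (hVν : ∀ i, P.map (V i) = ν) {g : α → ℝ} (hg : Measurable g)
    (hgν : Integrable g ν) :
    ∀ᵐ ω ∂P, Tendsto (fun n : ℕ => (∑ i ∈ range n, g (V i ω)) / n) atTop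
      (𝓝 (∫ x, g x ∂ν)) := by
  have hident : ∀ i, IdentDistrib (V i) (V 0) P P := fun i =>
    ⟨(hV i).aemeasurable, (hV 0).aemeasurable, by rw [hVν, hVν]⟩
  have hint : Integrable (g ∘ V 0) P := by
    rw [← hVν 0] at hgν
    exact (integrable_map_measure hg.aestronglyMeasurable (hV 0).aemeasurable).1 hgν
  have hmean : ∫ ω, g (V 0 ω) ∂P = ∫ x, g x ∂ν := by
    rw [← hVν 0, integral_map (hV 0).aemeasurable hg.aestronglyMeasurable]
  rw [← hmean]
  exact strong_law_ae_real (fun i ω => g (V i ω)) hint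
    (fun i j hij => (hind hij).comp hg hg) (fun i => (hident i).comp hg)

end probability

section integrals

variable (a b : ℝ)

theorem walkStep_eq_indicator :
    walkStep a = ({1} ×ˢ Set.Iic a).indicator 1 - ({1}ᶜ ×ˢ Set.univ).indicator 1 := by
  ext x
  by_cases h : x.1 = 1 <;> simp [walkStep, Set.indicator_apply, h]

theorem midBirth_eq_indicator : midBirth a b = ({1} ×ˢ Set.Ioo a b).indicator 1 := by
  ext x
  simp [midBirth, Set.indicator_apply]

theorem measurable_walkStep : Measurable (walkStep a) := by
  rw [walkStep_eq_indicator]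
  exact (measurable_one.indicator ((measurableSet_singleton 1).prod measurableSet_Iic)).sub
    (measurable_one.indicator ((measurableSet_singleton 1).compl.prod MeasurableSet.univ))

theorem measurable_midBirth : Measurable (midBirth a b) := by
  rw [midBirth_eq_indicator]
  exact measurable_one.indicator ((measurableSet_singleton 1).prod measurableSet_Ioo)

theorem integrable_walkStep (ρ : Measure (ℝ × ℝ)) [IsFiniteMeasure ρ] :
    Integrable (walkStep a) ρ := by
  rw [walkStep_eq_indicator]
  exact ((integrable_const 1).indicator ((measurableSet_singleton 1).prod measurableSet_Iic)).sub
    ((integrable_const 1).indicator ((measurableSet_singleton 1).compl.prod MeasurableSet.univ))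

theorem integrable_midBirth (ρ : Measure (ℝ × ℝ)) [IsFiniteMeasure ρ] :
    Integrable (midBirth a b) ρ := by
  rw [midBirth_eq_indicator]
  exact (integrable_const 1).indicator ((measurableSet_singleton 1).prod measurableSet_Ioo)

theorem integral_walkStep (ν μ : Measure ℝ) [IsFiniteMeasure ν] [IsProbabilityMeasure μ] :
    ∫ x, walkStep a x ∂(ν.prod μ) = ν.real {1} * μ.real (Set.Iic a) - ν.real {1}ᶜ := by
  have hbirth : MeasurableSet (({1} : Set ℝ) ×ˢ Set.Iic a) :=
    (measurableSet_singleton 1).prod measurableSet_Iic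
  have hdeath : MeasurableSet (({1}ᶜ : Set ℝ) ×ˢ (Set.univ : Set ℝ)) :=
    (measurableSet_singleton 1).compl.prod MeasurableSet.univ
  rw [walkStep_eq_indicator, Pi.sub_def, integral_sub ((integrable_const 1).indicator hbirth)
    ((integrable_const 1).indicator hdeath), integral_indicator_one hbirth,
    integral_indicator_one hdeath, measureReal_prod_prod, measureReal_prod_prod, probReal_univ,
    mul_one]

theorem integral_midBirth (ν μ : Measure ℝ) [SFinite μ] :
    ∫ x, midBirth a b x ∂(ν.prod μ) = ν.real {1} * μ.real (Set.Ioo a b) := by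
  rw [midBirth_eq_indicator, integral_indicator_one
    ((measurableSet_singleton 1).prod measurableSet_Ioo), measureReal_prod_prod]

end integrals

section model

variable {Ω : Type*} [MeasurableSpace Ω] {P : Measure Ω} {ι β : Type*} [MeasurableSpace β]
  {B U : ι → Ω → β}

theorem pairwise_indepFun_prodMk_of_iIndepFun_sumElim (hB : ∀ i, Measurable (B i))
    (hU : ∀ i, Measurable (U i)) (h : iIndepFun (Sum.elim B U) P) :
    Pairwise fun i j => IndepFun (fun ω => (B i ω, U i ω)) (fun ω => (B j ω, U j ω)) P :=
  fun i j hij => h.indepFun_prodMk_prodMk (fun k => k.rec hB hU) (.inl i) (.inr i) (.inl j)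
    (.inr j) (by simpa using hij) Sum.inl_ne_inr Sum.inr_ne_inl (by simpa using hij)

theorem map_prodMk_of_iIndepFun_sumElim [IsFiniteMeasure P] (hB : ∀ i, Measurable (B i))
    (hU : ∀ i, Measurable (U i)) (h : iIndepFun (Sum.elim B U) P) (i : ι) :
    P.map (fun ω => (B i ω, U i ω)) = (P.map (B i)).prod (P.map (U i)) :=
  (indepFun_iff_map_prod_eq_prod_map_map (hB i).aemeasurable (hU i).aemeasurable).1
    (h.indepFun (i := .inl i) (j := .inr i) Sum.inl_ne_inr)

end model

theorem stmt12_general {Ω : Type*} [MeasurableSpace Ω] (P : Measure Ω) [IsProbabilityMeasure P]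
    (p : ℝ) (hp : 1 / 2 < p) (hp1 : p < 1)
    (μ : Measure ℝ) [IsProbabilityMeasure μ] [NullSingletonClass μ]
    (B U : ℕ → Ω → ℝ)
    (hmB : ∀ n, Measurable (B n)) (hmU : ∀ n, Measurable (U n))
    (hindep : iIndepFun (Sum.elim B U) P)
    (hBdist : ∀ n, Measure.map (B n) P
      = ENNReal.ofReal p • Measure.dirac (1 : ℝ) + ENNReal.ofReal (1 - p) • Measure.dirac (0 : ℝ))
    (hUdist : ∀ n, Measure.map (U n) P = μ)
    (fc : ℝ) (hfc : μ (Set.Iio fc) = ENNReal.ofReal ((1 - p) / p))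
    (a b : ℝ) (ha : fc ≤ a) :
    ∀ᵐ ω ∂P, Tendsto
      (fun n : ℕ => (((evoS B U ω n).filter (fun x => a < x ∧ x < b)).card : ℝ) / n)
      atTop (nhds (p * (μ (Set.Ioo a b)).toReal)) := by
  have hp0 : 0 < p := by linarith
  set νB :=
    ENNReal.ofReal p • Measure.dirac (1 : ℝ) + ENNReal.ofReal (1 - p) • Measure.dirac (0 : ℝ)
  have : IsFiniteMeasure νB := by rw [← hBdist 0]; infer_instance
  have hV : ∀ i, Measurable fun ω => (B (i + 1) ω, U (i + 1) ω) := fun i =>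
    (hmB _).prodMk (hmU _)
  have hind : Pairwise fun i j => IndepFun (fun ω => (B (i + 1) ω, U (i + 1) ω))
      (fun ω => (B (j + 1) ω, U (j + 1) ω)) P := fun i j hij =>
    pairwise_indepFun_prodMk_of_iIndepFun_sumElim hmB hmU hindep (Nat.succ_injective.ne hij)
  have hlaw : ∀ i, P.map (fun ω => (B (i + 1) ω, U (i + 1) ω)) = νB.prod μ := fun i => by
    rw [map_prodMk_of_iIndepFun_sumElim hmB hmU hindep, hBdist, hUdist]
  have hUind : Pairwise fun i j => IndepFun (U i) (U j) P := fun i j hij =>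
    hindep.indepFun (i := .inr i) (j := .inr j) (by simpa using hij)
  have hd : 0 ≤ p * μ.real (Set.Iic a) - (1 - p) := by
    have hle : ENNReal.ofReal ((1 - p) / p) ≤ μ (Set.Iic a) :=
      hfc ▸ measure_mono (Set.Iio_subset_Iic_iff.2 ha)
    rw [ENNReal.ofReal_le_iff_le_toReal (measure_ne_top _ _), div_le_iff₀' hp0] at hle
    exact sub_nonneg.2 hle
  filter_upwards [strong_law_ae_comp hV hind hlaw (measurable_walkStep a)
      (integrable_walkStep a _), strong_law_ae_comp hV hind hlaw (measurable_midBirth a b)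
      (integrable_midBirth a b _), ae_injective_of_indepFun hmU hUind hUdist] with ω hX hM hinj
  have hν1 : νB.real {1} = p := by simp [νB, Measure.real, hp0.le]
  have hν1c : νB.real {1}ᶜ = 1 - p := by simp [νB, Measure.real, hp1.le]
  rw [integral_walkStep, hν1, hν1c] at hX
  rw [integral_midBirth, hν1] at hM
  exact tendsto_card_filter_Ioo_evoS_div B hinj hd hX hM

/-- Generalized model: fitnesses are i.i.d. with an atomless distribution `μ` and
`f_c` satisfies `μ((-∞, f_c)) = q/p`. Then for all `f_c ≤ a < b`, almost surely
`(1/n) |S_n ∩ (a,b)| → p μ((a,b))`. -/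
theorem stmt12 {Ω : Type*} [MeasurableSpace Ω] (P : Measure Ω) [IsProbabilityMeasure P]
    (p : ℝ) (hp : 1 / 2 < p) (hp1 : p < 1)
    (μ : Measure ℝ) [IsProbabilityMeasure μ] [NullSingletonClass μ]
    (B U : ℕ → Ω → ℝ)
    (hmB : ∀ n, Measurable (B n)) (hmU : ∀ n, Measurable (U n))
    (hB01 : ∀ n ω, B n ω = 0 ∨ B n ω = 1)
    (hindep : iIndepFun (Sum.elim B U) P)
    (hBdist : ∀ n, Measure.map (B n) P
      = ENNReal.ofReal p • Measure.dirac (1 : ℝ) + ENNReal.ofReal (1 - p) • Measure.dirac (0 : ℝ))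
    (hUdist : ∀ n, Measure.map (U n) P = μ)
    (fc : ℝ) (hfc : μ (Set.Iio fc) = ENNReal.ofReal ((1 - p) / p))
    (a b : ℝ) (ha : fc ≤ a) (hab : a < b) :
    ∀ᵐ ω ∂P, Tendsto
      (fun n : ℕ => (((evoS B U ω n).filter (fun x => a < x ∧ x < b)).card : ℝ) / n)
      atTop (nhds (p * (μ (Set.Ioo a b)).toReal)) :=
  stmt12_general P p hp hp1 μ B U hmB hmU hindep hBdist hUdist fc hfc a b ha
end
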